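/- If f and g are sos forms, then U_f · U_g ⊆ U_{fg}, where U_f · U_g denotes the linear span of products uv with u ∈ U_f, v ∈ U_g. -/

import Mathlib

open MvPolynomial Finsupp

/-- `f` is a sum of squares of forms of degree `d` in `n` variables. -/
def IsSOSForm (n d : ℕ) (f : MvPolynomial (Fin n) ℝ) : Prop :=
  ∃ (N : ℕ) (g : Fin N → MvPolynomial (Fin n) ℝ),
    (∀ i, (g i).IsHomogeneous d) ∧ f = ∑ i, (g i) ^ 2

/-- The cone `Σ_{2d}` of sums of squares of degree-`d` forms, as a subset of the
finite-dimensional real vector space `R[x]_{2d}` of forms of degree `2d`. -/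
def SigmaCone (n d : ℕ) : Set (homogeneousSubmodule (Fin n) ℝ (2 * d)) :=
  {f | IsSOSForm n d (f : MvPolynomial (Fin n) ℝ)}

/-- The canonical topology on the finite-dimensional real vector space of forms. -/
noncomputable instance (n d : ℕ) : TopologicalSpace (homogeneousSubmodule (Fin n) ℝ d) :=
  moduleTopology ℝ _

/-- A form is positive definite if it is positive away from the origin. -/
def PosDefForm (n : ℕ) (f : MvPolynomial (Fin n) ℝ) : Prop :=
  ∀ x : Fin n → ℝ, x ≠ 0 → 0 < eval x f

/-- For a sos form `f` of degree `2d`, the set `U_f` of forms `p` of degree `d`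
such that `f - c p ^ 2` is sos for some `c > 0`. -/
def Uset (n d : ℕ) (f : MvPolynomial (Fin n) ℝ) : Set (MvPolynomial (Fin n) ℝ) :=
  {p | p.IsHomogeneous d ∧ ∃ c : ℝ, 0 < c ∧ IsSOSForm n d (f - c • p ^ 2)}

/-! `U_f` is a subspace: it is closed under scaling, and for a common constant `c`,
`f - (c/4) (p + q)^2 = ½ (f - c p^2) + ½ (f - c q^2) + (c/4) (p - q)^2`.
For products, `f g - c c' (u v)^2 = f (g - c' v^2) + (f - c u^2) (c' v^2)`, which is sos
because the product of two sos forms is sos. -/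

namespace IsSOSForm

variable {n d e : ℕ} {f g p : MvPolynomial (Fin n) ℝ}

theorem sq (hp : p.IsHomogeneous d) : IsSOSForm n d (p ^ 2) :=
  ⟨1, fun _ => p, fun _ => hp, by simp⟩

theorem add (hf : IsSOSForm n d f) (hg : IsSOSForm n d g) : IsSOSForm n d (f + g) := by
  obtain ⟨N, u, hu, rfl⟩ := hf
  obtain ⟨M, v, hv, rfl⟩ := hg
  refine ⟨N + M, Fin.append u v, Fin.addCases (by simpa using hu) (by simpa using hv), ?_⟩
  simp [Fin.sum_univ_add]

theorem smul {t : ℝ} (ht : 0 ≤ t) (hf : IsSOSForm n d f) : IsSOSForm n d (t • f) := by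
  obtain ⟨N, u, hu, rfl⟩ := hf
  refine ⟨N, fun i => Real.sqrt t • u i,
    fun i => (homogeneousSubmodule _ ℝ d).smul_mem _ (hu i), ?_⟩
  simp only [Finset.smul_sum, smul_pow, Real.sq_sqrt ht]

theorem mul (hf : IsSOSForm n d f) (hg : IsSOSForm n e g) : IsSOSForm n (d + e) (f * g) := by
  obtain ⟨N, u, hu, rfl⟩ := hf
  obtain ⟨M, v, hv, rfl⟩ := hg
  let w : Fin N × Fin M → MvPolynomial (Fin n) ℝ := fun k => u k.1 * v k.2
  refine ⟨N * M, w ∘ finProdFinEquiv.symm, fun k => (hu _).mul (hv _), ?_⟩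
  rw [Finset.sum_mul_sum, ← Finset.sum_product', Function.comp_def,
    Equiv.sum_comp finProdFinEquiv.symm (fun k => w k ^ 2)]
  simp only [w, mul_pow, Finset.univ_product_univ]

theorem sub_smul_sq_of_le {c c' : ℝ} (hp : p.IsHomogeneous d) (hc : c' ≤ c)
    (hf : IsSOSForm n d (f - c • p ^ 2)) : IsSOSForm n d (f - c' • p ^ 2) := by
  have key : f - c' • p ^ 2 = (f - c • p ^ 2) + (c - c') • p ^ 2 := by module
  rw [key]
  exact hf.add ((sq hp).smul (sub_nonneg.2 hc))

end IsSOSForm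

namespace Uset

variable {n d e : ℕ} {f g p q : MvPolynomial (Fin n) ℝ}

theorem zero_mem (hf : IsSOSForm n d f) : (0 : MvPolynomial (Fin n) ℝ) ∈ Uset n d f :=
  ⟨isHomogeneous_zero _ _ _, 1, one_pos, by simpa using hf⟩

theorem add_mem (hp : p ∈ Uset n d f) (hq : q ∈ Uset n d f) : p + q ∈ Uset n d f := by
  obtain ⟨hpd, a, ha, hpa⟩ := hp
  obtain ⟨hqd, b, hb, hqb⟩ := hq
  set c := min a b
  have hpc := hpa.sub_smul_sq_of_le hpd (min_le_left a b)
  have hqc := hqb.sub_smul_sq_of_le hqd (min_le_right a b)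
  refine ⟨hpd.add hqd, c / 4, by positivity, ?_⟩
  have key : f - (c / 4) • (p + q) ^ 2 =
      (1 / 2 : ℝ) • (f - c • p ^ 2) + (1 / 2 : ℝ) • (f - c • q ^ 2) + (c / 4) • (p - q) ^ 2 := by
    have hadd : (p + q) ^ 2 = p ^ 2 + q ^ 2 + (2 : ℝ) • (p * q) := by rw [two_smul]; ring
    have hsub : (p - q) ^ 2 = p ^ 2 + q ^ 2 - (2 : ℝ) • (p * q) := by rw [two_smul]; ring
    rw [hadd, hsub]
    module
  rw [key]
  exact ((hpc.smul (by norm_num)).add (hqc.smul (by norm_num))).add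
    ((IsSOSForm.sq (hpd.sub hqd)).smul (by positivity))

theorem smul_mem (hf : IsSOSForm n d f) (t : ℝ) (hp : p ∈ Uset n d f) : t • p ∈ Uset n d f := by
  rcases eq_or_ne t 0 with rfl | ht
  · simpa using zero_mem hf
  obtain ⟨hpd, c, hc, hpc⟩ := hp
  refine ⟨(homogeneousSubmodule _ ℝ d).smul_mem t hpd, c / t ^ 2, by positivity, ?_⟩
  rwa [smul_pow, smul_smul, div_mul_cancel₀ _ (pow_ne_zero 2 ht)]

def submodule (hf : IsSOSForm n d f) : Submodule ℝ (MvPolynomial (Fin n) ℝ) where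
  carrier := Uset n d f
  zero_mem' := zero_mem hf
  add_mem' := add_mem
  smul_mem' t _ := smul_mem hf t

theorem mul_mem (hf : IsSOSForm n d f) (hp : p ∈ Uset n d f) (hq : q ∈ Uset n e g) :
    p * q ∈ Uset n (d + e) (f * g) := by
  obtain ⟨hpd, a, ha, hpa⟩ := hp
  obtain ⟨hqe, b, hb, hqb⟩ := hq
  refine ⟨hpd.mul hqe, a * b, by positivity, ?_⟩
  have key : f * g - (a * b) • (p * q) ^ 2 =
      f * (g - b • q ^ 2) + (f - a • p ^ 2) * (b • q ^ 2) := by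
    simp only [smul_eq_C_mul, map_mul]
    ring
  rw [key]
  exact (hf.mul hqb).add (hpa.mul ((IsSOSForm.sq hqe).smul hb.le))

end Uset

theorem span_mul_Uset_subset_general (n d e : ℕ) (f g : MvPolynomial (Fin n) ℝ)
    (hfs : IsSOSForm n d f) (hgs : IsSOSForm n e g) :
    (Submodule.span ℝ {w : MvPolynomial (Fin n) ℝ |
        ∃ u ∈ Uset n d f, ∃ v ∈ Uset n e g, w = u * v} : Set (MvPolynomial (Fin n) ℝ))
      ⊆ Uset n (d + e) (f * g) := by
  refine (Submodule.span_le (p := Uset.submodule (hfs.mul hgs))).2 ?_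
  rintro _ ⟨u, hu, v, hv, rfl⟩
  exact Uset.mul_mem hfs hu hv

theorem span_mul_Uset_subset (n d e : ℕ) (f g : MvPolynomial (Fin n) ℝ)
    (hf : f.IsHomogeneous (2 * d)) (hg : g.IsHomogeneous (2 * e))
    (hfs : IsSOSForm n d f) (hgs : IsSOSForm n e g) :
    (Submodule.span ℝ {w : MvPolynomial (Fin n) ℝ |
        ∃ u ∈ Uset n d f, ∃ v ∈ Uset n e g, w = u * v} : Set (MvPolynomial (Fin n) ℝ))
      ⊆ Uset n (d + e) (f * g) :=
  span_mul_Uset_subset_general n d e f g hfs hgs
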